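/- Concentration plus extinction in the limit m → 0 of planar fast diffusion: let N = 2, fix M > 0 and t > 0. For each m ∈ (0,1) set α = 1/m, β = 1/(2m), k = (1-m)/(4m²), and let B_m(x,τ) = τ^{-α}(C(m) + k|x|² τ^{-2β})^{-1/(1-m)} be the Barenblatt solution of ∂_τ u = Δ(u^m) on ℝ², with C(m) > 0 chosen so that ∫_{ℝ²} B_m(x,τ) dx = M for τ > 0. Set B̃_m(x,t) = B_m(x, t/m), which solves the rescaled equation ∂_t u = div(u^{m-1}∇u). Then, as m → 0 from above: (a) for every x ≠ 0, B̃_m(x,t) → 0; and (b) for every continuous compactly supported function f : ℝ² → ℝ, ∫_{ℝ²} f(x) B̃_m(x,t) dx → max(M − 4πt, 0)·f(0); that is, B̃_m(·,t) dx converges vaguely to the measure (M − 4πt)₊ δ₀. -/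

import Mathlib

open MeasureTheory Real Filter Topology Set

noncomputable section

/-- The Barenblatt solution of the fast diffusion equation `∂_τ u = Δ(u^m)` on
`ℝ²`, with `α = 1/m`, `β = 1/(2m)`, `k = (1-m)/(4m²)`:
`B_m(x,τ) = τ^{-α}(C + k|x|² τ^{-2β})^{-1/(1-m)}`. -/
def planarBarenblatt (m C : ℝ) (x : EuclideanSpace ℝ (Fin 2)) (τ : ℝ) : ℝ :=
  τ ^ (-(1 / m)) *
    (C + (1 - m) / (4 * m ^ 2) * ‖x‖ ^ 2 * τ ^ (-(2 * (1 / (2 * m))))) ^ (-(1 / (1 - m)))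

/-!
At time `τ = t/m` the profile is `A (C + k A |x|²)^{-1/(1-m)}` with `A = (t/m)^{-1/m}`, and polar
coordinates give its mass outside the disc of radius `δ` in closed form:
`4πm (C + k A δ²)^{-m/(1-m)}`. For `δ = 0` this is the total mass, so `4πm C^{-m/(1-m)} = M`,
while `4πm (k A δ²)^{-m/(1-m)} → 4πt`. As the exponent `m/(1-m)` tends to `0`,
`(a + b)^{-m/(1-m)}` behaves like `max(a, b)^{-m/(1-m)}`, so the mass outside the disc tends to
`min(M, 4πt)` and the mass inside to `(M - 4πt)₊`, whatever `δ > 0`. Outside the disc the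
profile is at most a multiple of `m` and so tends to `0` uniformly; a continuous compactly
supported test function therefore only sees the mass concentrating at the origin.
-/

open Metric

local notation "ℝ²" => EuclideanSpace ℝ (Fin 2)

section Concentration

variable {ι X : Type*} [MeasurableSpace X] {μ : Measure X} {l : Filter ι}
  {f : X → ℝ} {g : ι → X → ℝ}

theorem tendsto_setIntegral_mul_of_tendstoUniformlyOn_zero {s : Set X} (hs : MeasurableSet s)
    (hf : Integrable f μ) (hg : TendstoUniformlyOn g 0 l s) :
    Tendsto (fun i => ∫ x in s, f x * g i x ∂μ) l (𝓝 0) := by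
  rw [Metric.tendsto_nhds]
  intro ε hε
  have hI : 0 ≤ ∫ x, ‖f x‖ ∂μ := integral_nonneg fun _ => norm_nonneg _
  set η := ε / ((∫ x, ‖f x‖ ∂μ) + 1)
  have hη : 0 < η := by positivity
  filter_upwards [Metric.tendstoUniformlyOn_iff.1 hg η hη] with i hi
  have hbound : ∀ᵐ x ∂μ.restrict s, ‖f x * g i x‖ ≤ η * ‖f x‖ := by
    refine ae_restrict_of_forall_mem hs fun x hx => ?_
    have := hi x hx
    rw [Pi.zero_apply, dist_zero_left] at this
    rw [norm_mul, mul_comm]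
    gcongr
  rw [dist_zero_right]
  calc ‖∫ x in s, f x * g i x ∂μ‖ ≤ ∫ x in s, η * ‖f x‖ ∂μ :=
        norm_integral_le_of_norm_le (hf.norm.const_mul η).integrableOn hbound
    _ ≤ η * ∫ x, ‖f x‖ ∂μ := by
        rw [integral_const_mul]
        exact mul_le_mul_of_nonneg_left
          (setIntegral_le_integral hf.norm (ae_of_all _ fun _ => norm_nonneg _)) hη.le
    _ < η * ((∫ x, ‖f x‖ ∂μ) + 1) := by gcongr; linarith
    _ = ε := div_mul_cancel₀ ε (by positivity)

theorem tendsto_integral_mul_of_concentration [PseudoMetricSpace X] [OpensMeasurableSpace X]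
    {a : X} {L K : ℝ}
    (hg_nonneg : ∀ᶠ i in l, ∀ x, 0 ≤ g i x) (hg_int : ∀ᶠ i in l, Integrable (g i) μ)
    (hball : ∀ δ > 0, Tendsto (fun i => ∫ x in ball a δ, g i x ∂μ) l (𝓝 L))
    (hcompl : ∀ δ > 0, TendstoUniformlyOn g 0 l (ball a δ)ᶜ)
    (hf : Integrable f μ) (hf_bdd : ∀ x, ‖f x‖ ≤ K) (hfa : ContinuousAt f a) :
    Tendsto (fun i => ∫ x, f x * g i x ∂μ) l (𝓝 (L * f a)) := by
  rw [Metric.tendsto_nhds]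
  intro ε hε
  set η := ε / (2 * (|L| + 1))
  have hη : 0 < η := by positivity
  obtain ⟨δ, hδ, hfδ⟩ := Metric.continuousAt_iff.1 hfa η hη
  have hfar : Tendsto (fun i => f a * ∫ x in ball a δ, g i x ∂μ
      + ∫ x in (ball a δ)ᶜ, f x * g i x ∂μ) l (𝓝 (L * f a)) := by
    simpa [mul_comm] using ((hball δ hδ).const_mul (f a)).add
      (tendsto_setIntegral_mul_of_tendstoUniformlyOn_zero measurableSet_ball.compl hf
        (hcompl δ hδ))
  have hηL : η * L < ε / 2 := by
    calc η * L ≤ η * |L| := by gcongr; exact le_abs_self L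
      _ < η * (|L| + 1) := by gcongr; linarith
      _ = ε / 2 := by simp only [η]; field_simp
  filter_upwards [hg_nonneg, hg_int, Metric.tendsto_nhds.1 hfar (ε / 2) (half_pos hε),
    ((hball δ hδ).const_mul η).eventually_lt_const hηL] with i hgi hgi_int hi_far hi_near
  have hfg : Integrable (fun x => f x * g i x) μ :=
    hgi_int.bdd_mul hf.aestronglyMeasurable (ae_of_all _ hf_bdd)
  have hsplit : ∫ x, f x * g i x ∂μ = ∫ x in ball a δ, (f x - f a) * g i x ∂μ
      + (f a * ∫ x in ball a δ, g i x ∂μ + ∫ x in (ball a δ)ᶜ, f x * g i x ∂μ) := by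
    have hmid : ∫ x in ball a δ, (f x - f a) * g i x ∂μ
        = ∫ x in ball a δ, f x * g i x ∂μ - f a * ∫ x in ball a δ, g i x ∂μ := by
      rw [← integral_const_mul, ← integral_sub hfg.integrableOn
        (hgi_int.integrableOn.const_mul (f a))]
      simp only [sub_mul]
    rw [hmid, ← integral_add_compl measurableSet_ball hfg]
    ring
  have hnear :
      ‖∫ x in ball a δ, (f x - f a) * g i x ∂μ‖ ≤ η * ∫ x in ball a δ, g i x ∂μ := by
    rw [← integral_const_mul]
    refine norm_integral_le_of_norm_le (hgi_int.integrableOn.const_mul η)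
      (ae_restrict_of_forall_mem measurableSet_ball fun x hx => ?_)
    rw [norm_mul, Real.norm_of_nonneg (hgi x)]
    exact mul_le_mul_of_nonneg_right (hfδ hx).le (hgi x)
  rw [hsplit, Real.dist_eq, add_sub_assoc]
  rw [Real.dist_eq] at hi_far
  calc _ ≤ ‖∫ x in ball a δ, (f x - f a) * g i x ∂μ‖ + |_| := abs_add_le _ _
    _ < ε / 2 + ε / 2 := add_lt_add_of_le_of_lt (hnear.trans hi_near.le) hi_far
    _ = ε := add_halves ε

end Concentration

section RadialIntegrals

variable {c a p : ℝ}

theorem hasDerivAt_rpow_add_mul_sq_div (hc : 0 < c) (ha : 0 < a) (hp : p ≠ 1) (r : ℝ) :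
    HasDerivAt (fun r : ℝ => (c + a * r ^ 2) ^ (1 - p) / (2 * a * (1 - p)))
      (r * (c + a * r ^ 2) ^ (-p)) r := by
  have hbase : HasDerivAt (fun r : ℝ => c + a * r ^ 2) (2 * a * r) r := by
    simpa [mul_comm, mul_assoc, mul_left_comm] using
      ((hasDerivAt_pow 2 r).const_mul a).const_add c
  refine ((hbase.rpow_const (p := 1 - p) (Or.inl (by positivity))).div_const
    (2 * a * (1 - p))).congr_deriv ?_
  rw [sub_sub_cancel_left, div_eq_iff (mul_ne_zero (by positivity) (sub_ne_zero.2 hp.symm))]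
  ring

theorem tendsto_rpow_add_mul_sq_div_atTop (ha : 0 < a) (hp : 1 < p) :
    Tendsto (fun r : ℝ => (c + a * r ^ 2) ^ (1 - p) / (2 * a * (1 - p))) atTop (𝓝 0) := by
  have hbase : Tendsto (fun r : ℝ => c + a * r ^ 2) atTop atTop :=
    tendsto_atTop_add_const_left _ c ((tendsto_pow_atTop two_ne_zero).const_mul_atTop ha)
  have hpow : Tendsto (fun x : ℝ => x ^ (1 - p)) atTop (𝓝 0) := by
    simpa using tendsto_rpow_neg_atTop (sub_pos.2 hp)
  simpa using (hpow.comp hbase).div_const (2 * a * (1 - p))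

theorem integrableOn_Ioi_mul_rpow_add_mul_sq (hc : 0 < c) (ha : 0 < a) (hp : 1 < p) :
    IntegrableOn (fun r : ℝ => r * (c + a * r ^ 2) ^ (-p)) (Ioi 0) :=
  integrableOn_Ioi_deriv_of_nonneg' (fun r _ => hasDerivAt_rpow_add_mul_sq_div hc ha hp.ne' r)
    (fun r (hr : 0 < r) => by positivity) (tendsto_rpow_add_mul_sq_div_atTop ha hp)

theorem integral_Ioi_mul_rpow_add_mul_sq (hc : 0 < c) (ha : 0 < a) (hp : 1 < p) {δ : ℝ}
    (hδ : 0 ≤ δ) :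
    ∫ r in Ioi δ, r * (c + a * r ^ 2) ^ (-p)
      = (c + a * δ ^ 2) ^ (1 - p) / (2 * a * (p - 1)) := by
  have hnonneg : ∀ r ∈ Ioi δ, 0 ≤ r * (c + a * r ^ 2) ^ (-p) := fun r hr => by
    have : 0 ≤ r := hδ.trans (le_of_lt hr)
    positivity
  rw [integral_Ioi_of_hasDerivAt_of_nonneg'
    (fun r _ => hasDerivAt_rpow_add_mul_sq_div hc ha hp.ne' r) hnonneg
    (tendsto_rpow_add_mul_sq_div_atTop ha hp), zero_sub,
    show 2 * a * (p - 1) = -(2 * a * (1 - p)) by ring, div_neg]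

end RadialIntegrals

section Plane

theorem integral_fun_norm_euclideanSpace_two (g : ℝ → ℝ) :
    ∫ x : ℝ², g ‖x‖ = 2 * π * ∫ r in Ioi 0, r * g r := by
  simp [integral_fun_norm_addHaar volume g, measureReal_def, mul_assoc, pi_nonneg]

theorem integrable_fun_norm_euclideanSpace_two_iff {g : ℝ → ℝ} :
    Integrable (fun x : ℝ² => g ‖x‖) ↔ IntegrableOn (fun r => r * g r) (Ioi 0) := by
  simp [integrable_fun_norm_addHaar volume (f := g)]

variable {c a p : ℝ}

theorem integrable_rpow_add_mul_norm_sq (hc : 0 < c) (ha : 0 < a) (hp : 1 < p) :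
    Integrable (fun x : ℝ² => (c + a * ‖x‖ ^ 2) ^ (-p)) :=
  integrable_fun_norm_euclideanSpace_two_iff.2 (integrableOn_Ioi_mul_rpow_add_mul_sq hc ha hp)

theorem setIntegral_compl_ball_rpow_add_mul_norm_sq (hc : 0 < c) (ha : 0 < a) (hp : 1 < p)
    {δ : ℝ} (hδ : 0 ≤ δ) :
    ∫ x in (ball (0 : ℝ²) δ)ᶜ, (c + a * ‖x‖ ^ 2) ^ (-p)
      = π / (a * (p - 1)) * (c + a * δ ^ 2) ^ (1 - p) := by
  set h : ℝ → ℝ := fun r => (c + a * r ^ 2) ^ (-p)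
  have hradial :
      ∫ x in (ball (0 : ℝ²) δ)ᶜ, h ‖x‖ = ∫ x : ℝ², (Ici δ).indicator h ‖x‖ := by
    rw [← integral_indicator measurableSet_ball.compl]
    congr 1 with x
    by_cases hx : δ ≤ ‖x‖ <;> simp [hx]
  have hcut : ∫ r in Ioi 0, r * (Ici δ).indicator h r = ∫ r in Ioi δ, r * h r := by
    rw [show (fun r => r * (Ici δ).indicator h r) = (Ici δ).indicator (fun r => r * h r) from
      funext fun r => (indicator_mul_right _ (fun r => r) h).symm,
      integral_indicator measurableSet_Ici, Measure.restrict_restrict measurableSet_Ici]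
    refine setIntegral_congr_set ?_
    have hsame : Ioi δ ∩ Ioi 0 = Ioi δ := by rw [Ioi_inter_Ioi, max_eq_left hδ]
    exact hsame ▸ (Ioi_ae_eq_Ici (μ := volume)).symm.inter (ae_eq_refl (Ioi (0 : ℝ)))
  rw [hradial, integral_fun_norm_euclideanSpace_two, hcut,
    integral_Ioi_mul_rpow_add_mul_sq hc ha hp hδ]
  field_simp

end Plane

theorem rpow_neg_add_le_min {x y q : ℝ} (hx : 0 < x) (hy : 0 < y) (hq : 0 ≤ q) :
    (x + y) ^ (-q) ≤ min (x ^ (-q)) (y ^ (-q)) :=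
  le_min (rpow_le_rpow_of_nonpos hx (by linarith) (neg_nonpos.2 hq))
    (rpow_le_rpow_of_nonpos hy (by linarith) (neg_nonpos.2 hq))

theorem two_rpow_neg_mul_min_le_rpow_neg_add {x y q : ℝ} (hx : 0 < x) (hy : 0 < y)
    (hq : 0 ≤ q) : 2 ^ (-q) * min (x ^ (-q)) (y ^ (-q)) ≤ (x + y) ^ (-q) := by
  wlog hxy : x ≤ y generalizing x y
  · simpa only [min_comm, add_comm] using this hy hx (le_of_not_ge hxy)
  calc 2 ^ (-q) * min (x ^ (-q)) (y ^ (-q)) ≤ 2 ^ (-q) * y ^ (-q) := by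
        gcongr; exact min_le_right _ _
    _ = (2 * y) ^ (-q) := (mul_rpow zero_le_two hy.le).symm
    _ ≤ (x + y) ^ (-q) := rpow_le_rpow_of_nonpos (by positivity) (by linarith) (neg_nonpos.2 hq)

theorem Filter.Tendsto.mul_rpow_neg_add {ι : Type*} {l : Filter ι} {w x y q : ι → ℝ} {X Y : ℝ}
    (hX : Tendsto (fun i => w i * x i ^ (-q i)) l (𝓝 X))
    (hY : Tendsto (fun i => w i * y i ^ (-q i)) l (𝓝 Y)) (hq : Tendsto q l (𝓝 0))
    (hpos : ∀ᶠ i in l, 0 ≤ w i ∧ 0 < x i ∧ 0 < y i ∧ 0 ≤ q i) :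
    Tendsto (fun i => w i * (x i + y i) ^ (-q i)) l (𝓝 (min X Y)) := by
  have hmin := hX.min hY
  have htwo : Tendsto (fun i => (2 : ℝ) ^ (-q i)) l (𝓝 1) := by
    simpa using tendsto_const_nhds.rpow hq.neg (Or.inl two_ne_zero)
  refine tendsto_of_tendsto_of_tendsto_of_le_of_le' (by simpa using htwo.mul hmin) hmin ?_ ?_
  · filter_upwards [hpos] with i ⟨hw, hx, hy, hq⟩
    rw [← mul_min_of_nonneg _ _ hw, mul_left_comm]
    exact mul_le_mul_of_nonneg_left (two_rpow_neg_mul_min_le_rpow_neg_add hx hy hq) hw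
  · filter_upwards [hpos] with i ⟨hw, hx, hy, hq⟩
    rw [← mul_min_of_nonneg _ _ hw]
    exact mul_le_mul_of_nonneg_left (rpow_neg_add_le_min hx hy hq) hw

theorem tendsto_div_one_sub_nhdsGT_zero :
    Tendsto (fun m : ℝ => m / (1 - m)) (𝓝[>] 0) (𝓝 0) := by
  have h : ContinuousAt (fun m : ℝ => m / (1 - m)) 0 := by fun_prop (disch := norm_num)
  simpa using h.tendsto.mono_left nhdsWithin_le_nhds

theorem tendsto_rpow_div_one_sub_nhdsGT_zero :
    Tendsto (fun m : ℝ => m ^ (m / (1 - m))) (𝓝[>] 0) (𝓝 1) := by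
  have hden : Tendsto (fun m : ℝ => 1 - m) (𝓝[>] 0) (𝓝 1) := by
    have h : Continuous fun m : ℝ => 1 - m := by fun_prop
    simpa using (h.tendsto 0).mono_left nhdsWithin_le_nhds
  have hlog : Tendsto (fun m : ℝ => log m * m ^ (1 : ℝ) / (1 - m)) (𝓝[>] 0) (𝓝 (0 / 1)) :=
    (tendsto_log_mul_rpow_nhdsGT_zero one_pos).div hden one_ne_zero
  simp only [rpow_one, zero_div] at hlog
  have hexp := (continuous_exp.tendsto 0).comp hlog
  rw [exp_zero] at hexp
  refine hexp.congr' ?_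
  filter_upwards [self_mem_nhdsWithin] with m (hm : 0 < m)
  rw [Function.comp_apply, rpow_def_of_pos hm, mul_div_assoc]

section Barenblatt

def barenblattCoeff (m : ℝ) : ℝ := (1 - m) / (4 * m ^ 2)

variable {m C τ : ℝ}

theorem barenblattCoeff_pos (hm : 0 < m) (hm1 : m < 1) : 0 < barenblattCoeff m :=
  div_pos (sub_pos.2 hm1) (by positivity)

theorem barenblattCoeff_mul_inv_one_sub_sub_one (hm : 0 < m) (hm1 : m < 1) :
    barenblattCoeff m * (1 / (1 - m) - 1) = 1 / (4 * m) := by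
  have : 1 - m ≠ 0 := (sub_pos.2 hm1).ne'
  rw [barenblattCoeff]
  field_simp
  ring

theorem planarBarenblatt_eq (hm : m ≠ 0) (x : ℝ²) :
    planarBarenblatt m C x τ
      = τ ^ (-(1 / m))
        * (C + barenblattCoeff m * τ ^ (-(1 / m)) * ‖x‖ ^ 2) ^ (-(1 / (1 - m))) := by
  rw [planarBarenblatt, barenblattCoeff, show 2 * (1 / (2 * m)) = 1 / m by field_simp]
  ring_nf

section

variable (hm : 0 < m) (hm1 : m < 1) (hC : 0 < C) (hτ : 0 < τ)
include hm hm1 hC hτ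

theorem planarBarenblatt_pos (x : ℝ²) : 0 < planarBarenblatt m C x τ := by
  have := barenblattCoeff_pos hm hm1
  rw [planarBarenblatt_eq hm.ne']
  positivity

theorem integrable_planarBarenblatt : Integrable (fun x : ℝ² => planarBarenblatt m C x τ) := by
  simp_rw [planarBarenblatt_eq hm.ne']
  exact (integrable_rpow_add_mul_norm_sq hC
    (mul_pos (barenblattCoeff_pos hm hm1) (by positivity))
    (one_lt_one_div (sub_pos.2 hm1) (by linarith))).const_mul _

theorem setIntegral_compl_ball_planarBarenblatt {δ : ℝ} (hδ : 0 ≤ δ) :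
    ∫ x in (ball (0 : ℝ²) δ)ᶜ, planarBarenblatt m C x τ
      = 4 * π * m * (C + barenblattCoeff m * τ ^ (-(1 / m)) * δ ^ 2) ^ (-(m / (1 - m))) := by
  have hA : 0 < τ ^ (-(1 / m)) := by positivity
  have h1m : 1 - m ≠ 0 := (sub_pos.2 hm1).ne'
  simp_rw [planarBarenblatt_eq hm.ne']
  rw [integral_const_mul, setIntegral_compl_ball_rpow_add_mul_norm_sq hC
    (mul_pos (barenblattCoeff_pos hm hm1) hA) (one_lt_one_div (sub_pos.2 hm1) (by linarith)) hδ,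
    show 1 - 1 / (1 - m) = -(m / (1 - m)) by field_simp; ring,
    show barenblattCoeff m * τ ^ (-(1 / m)) * (1 / (1 - m) - 1) = τ ^ (-(1 / m)) / (4 * m) by
      rw [mul_right_comm, barenblattCoeff_mul_inv_one_sub_sub_one hm hm1]; ring]
  field_simp

theorem integral_planarBarenblatt :
    ∫ x, planarBarenblatt m C x τ = 4 * π * m * C ^ (-(m / (1 - m))) := by
  simpa using setIntegral_compl_ball_planarBarenblatt hm hm1 hC hτ le_rfl

theorem planarBarenblatt_le_of_le_norm {δ : ℝ} (hδ : 0 < δ) {x : ℝ²} (hx : δ ≤ ‖x‖) :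
    planarBarenblatt m C x τ ≤ (barenblattCoeff m * δ ^ 2)⁻¹
      * (barenblattCoeff m * τ ^ (-(1 / m)) * δ ^ 2) ^ (-(m / (1 - m))) := by
  have hk := barenblattCoeff_pos hm hm1
  have hA : 0 < τ ^ (-(1 / m)) := by positivity
  have h1m : 0 < 1 - m := sub_pos.2 hm1
  have hb : 0 < barenblattCoeff m * τ ^ (-(1 / m)) * δ ^ 2 := by positivity
  have hexp : -(1 / (1 - m)) = -1 + -(m / (1 - m)) := by field_simp [h1m.ne']; ring
  calc planarBarenblatt m C x τ
      ≤ τ ^ (-(1 / m)) * (barenblattCoeff m * τ ^ (-(1 / m)) * δ ^ 2) ^ (-(1 / (1 - m))) := by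
        rw [planarBarenblatt_eq hm.ne']
        gcongr τ ^ (-(1 / m)) * ?_
        refine rpow_le_rpow_of_nonpos hb ?_ (neg_nonpos.2 (by positivity))
        calc _ ≤ barenblattCoeff m * τ ^ (-(1 / m)) * ‖x‖ ^ 2 := by gcongr
          _ ≤ _ := le_add_of_nonneg_left hC.le
    _ = _ := by
        rw [hexp, rpow_add hb, rpow_neg_one]
        field_simp

end

end Barenblatt

section BarenblattLimit

variable {M t δ : ℝ}

theorem mul_rpow_barenblattCoeff_eq {m : ℝ} (hm : 0 < m) (hm1 : m < 1) (ht : 0 < t)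
    (hδ : 0 < δ) :
    m * (barenblattCoeff m * (t / m) ^ (-(1 / m)) * δ ^ 2) ^ (-(m / (1 - m)))
      = t ^ (1 / (1 - m)) * ((1 - m) * δ ^ 2 / 4) ^ (-(m / (1 - m))) * m ^ (m / (1 - m)) := by
  have h1m : 0 < 1 - m := sub_pos.2 hm1
  have hk := barenblattCoeff_pos hm hm1
  rw [← exp_log (by positivity :
      0 < m * (barenblattCoeff m * (t / m) ^ (-(1 / m)) * δ ^ 2) ^ (-(m / (1 - m)))),
    ← exp_log (by positivity :
      0 < t ^ (1 / (1 - m)) * ((1 - m) * δ ^ 2 / 4) ^ (-(m / (1 - m))) * m ^ (m / (1 - m)))]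
  congr 1
  simp (disch := positivity) only [log_mul, log_rpow, log_div, log_pow, barenblattCoeff]
  field_simp
  ring

theorem tendsto_mul_rpow_barenblattCoeff (ht : 0 < t) (hδ : 0 < δ) :
    Tendsto (fun m => m * (barenblattCoeff m * (t / m) ^ (-(1 / m)) * δ ^ 2) ^ (-(m / (1 - m))))
      (𝓝[>] 0) (𝓝 t) := by
  have hp : Tendsto (fun m : ℝ => 1 / (1 - m)) (𝓝[>] 0) (𝓝 1) := by
    have h : ContinuousAt (fun m : ℝ => 1 / (1 - m)) 0 := by fun_prop (disch := norm_num)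
    simpa using h.tendsto.mono_left nhdsWithin_le_nhds
  have htp : Tendsto (fun m : ℝ => t ^ (1 / (1 - m))) (𝓝[>] 0) (𝓝 t) := by
    simpa using tendsto_const_nhds.rpow hp (Or.inl ht.ne')
  have hbase : Tendsto (fun m : ℝ => ((1 - m) * δ ^ 2 / 4) ^ (-(m / (1 - m)))) (𝓝[>] 0)
      (𝓝 1) := by
    have h : Continuous fun m : ℝ => (1 - m) * δ ^ 2 / 4 := by fun_prop
    simpa using ((h.tendsto 0).mono_left nhdsWithin_le_nhds).rpow
      tendsto_div_one_sub_nhdsGT_zero.neg (Or.inl (by positivity))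
  have hlim := (htp.mul hbase).mul tendsto_rpow_div_one_sub_nhdsGT_zero
  rw [mul_one, mul_one] at hlim
  refine hlim.congr' ?_
  filter_upwards [Ioo_mem_nhdsGT one_pos] with m ⟨hm, hm1⟩
  exact (mul_rpow_barenblattCoeff_eq hm hm1 ht hδ).symm

theorem tendstoUniformlyOn_planarBarenblatt_compl_ball {C : ℝ → ℝ} (ht : 0 < t) (hδ : 0 < δ)
    (hC : ∀ m, 0 < m → m < 1 → 0 < C m) :
    TendstoUniformlyOn (fun m x => planarBarenblatt m (C m) x (t / m)) 0 (𝓝[>] 0)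
      (ball (0 : ℝ²) δ)ᶜ := by
  have hbound : Tendsto (fun m => 4 * m / ((1 - m) * δ ^ 2)
      * (m * (barenblattCoeff m * (t / m) ^ (-(1 / m)) * δ ^ 2) ^ (-(m / (1 - m)))))
      (𝓝[>] 0) (𝓝 0) := by
    have h : ContinuousAt (fun m : ℝ => 4 * m / ((1 - m) * δ ^ 2)) 0 := by
      fun_prop (disch := positivity)
    simpa using (h.tendsto.mono_left nhdsWithin_le_nhds).mul
      (tendsto_mul_rpow_barenblattCoeff ht hδ)
  rw [Metric.tendstoUniformlyOn_iff]
  intro ε hε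
  filter_upwards [Ioo_mem_nhdsGT one_pos, hbound.eventually_lt_const hε]
    with m ⟨hm, hm1⟩ hlt x hx
  have hpos := planarBarenblatt_pos hm hm1 (hC m hm hm1) (div_pos ht hm) x
  have hle := planarBarenblatt_le_of_le_norm hm hm1 (hC m hm hm1) (div_pos ht hm) hδ
    (by simpa using hx)
  rw [Pi.zero_apply, dist_zero_left, Real.norm_of_nonneg hpos.le]
  refine hle.trans_lt (lt_of_eq_of_lt ?_ hlt)
  have h1m : 1 - m ≠ 0 := (sub_pos.2 hm1).ne'
  rw [barenblattCoeff]
  field_simp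

theorem tendsto_setIntegral_ball_planarBarenblatt {C : ℝ → ℝ} (ht : 0 < t) (hδ : 0 < δ)
    (hC : ∀ m, 0 < m → m < 1 → 0 < C m)
    (hmass : ∀ m, 0 < m → m < 1 → ∫ x, planarBarenblatt m (C m) x (t / m) = M) :
    Tendsto (fun m => ∫ x in ball (0 : ℝ²) δ, planarBarenblatt m (C m) x (t / m)) (𝓝[>] 0)
      (𝓝 (max (M - 4 * π * t) 0)) := by
  have hmem : Ioo (0 : ℝ) 1 ∈ 𝓝[>] 0 := Ioo_mem_nhdsGT one_pos
  have hcompl : Tendsto (fun m => 4 * π * m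
      * (C m + barenblattCoeff m * (t / m) ^ (-(1 / m)) * δ ^ 2) ^ (-(m / (1 - m))))
      (𝓝[>] 0) (𝓝 (min M (4 * π * t))) := by
    refine Tendsto.mul_rpow_neg_add (tendsto_const_nhds.congr' ?_) ?_
      tendsto_div_one_sub_nhdsGT_zero ?_
    · filter_upwards [hmem] with m ⟨hm, hm1⟩
      rw [← hmass m hm hm1, integral_planarBarenblatt hm hm1 (hC m hm hm1) (div_pos ht hm)]
    · simpa [mul_assoc] using (tendsto_mul_rpow_barenblattCoeff ht hδ).const_mul (4 * π)
    · filter_upwards [hmem] with m ⟨hm, hm1⟩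
      have := barenblattCoeff_pos hm hm1
      have : 0 < 1 - m := sub_pos.2 hm1
      exact ⟨by positivity, hC m hm hm1, by positivity, by positivity⟩
  have hlim : M - min M (4 * π * t) = max (M - 4 * π * t) 0 := by
    rw [← max_sub_sub_left, sub_self, max_comm]
  rw [← hlim]
  refine (tendsto_const_nhds.sub hcompl).congr' ?_
  filter_upwards [hmem] with m ⟨hm, hm1⟩
  have hτ : 0 < t / m := div_pos ht hm
  rw [← setIntegral_compl_ball_planarBarenblatt hm hm1 (hC m hm hm1) hτ hδ.le, ← hmass m hm hm1,
    ← integral_add_compl measurableSet_ball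
      (integrable_planarBarenblatt hm hm1 (hC m hm hm1) hτ),
    add_sub_cancel_right]

end BarenblattLimit

theorem planar_barenblatt_limit_m_zero_general
    (M t : ℝ) (ht : 0 < t)
    (C : ℝ → ℝ) (hCpos : ∀ m, 0 < m → m < 1 → 0 < C m)
    (hmass : ∀ m, 0 < m → m < 1 → ∀ τ : ℝ, 0 < τ →
      ∫ x, planarBarenblatt m (C m) x τ = M) :
    (∀ x : EuclideanSpace ℝ (Fin 2), x ≠ 0 →
      Tendsto (fun m => planarBarenblatt m (C m) x (t / m)) (𝓝[>] 0) (𝓝 0)) ∧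
    (∀ f : EuclideanSpace ℝ (Fin 2) → ℝ, Continuous f → HasCompactSupport f →
      Tendsto (fun m => ∫ x, f x * planarBarenblatt m (C m) x (t / m))
        (𝓝[>] 0) (𝓝 (max (M - 4 * π * t) 0 * f 0))) := by
  have hfar (δ : ℝ) (hδ : 0 < δ) := tendstoUniformlyOn_planarBarenblatt_compl_ball ht hδ hCpos
  have hnear (δ : ℝ) (hδ : 0 < δ) := tendsto_setIntegral_ball_planarBarenblatt ht hδ
    hCpos fun m hm hm1 => hmass m hm hm1 _ (div_pos ht hm)
  refine ⟨fun x hx => (hfar _ (norm_pos_iff.2 hx)).tendsto_at (by simp), fun f hf hfs => ?_⟩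
  obtain ⟨K, hK⟩ := hfs.exists_bound_of_continuous hf
  have hmem : Ioo (0 : ℝ) 1 ∈ 𝓝[>] 0 := Ioo_mem_nhdsGT one_pos
  refine tendsto_integral_mul_of_concentration ?_ ?_ hnear hfar
    (hf.integrable_of_hasCompactSupport hfs) hK hf.continuousAt
  · filter_upwards [hmem] with m ⟨hm, hm1⟩ x
    exact (planarBarenblatt_pos hm hm1 (hCpos m hm hm1) (div_pos ht hm) x).le
  · filter_upwards [hmem] with m ⟨hm, hm1⟩
    exact integrable_planarBarenblatt hm hm1 (hCpos m hm hm1) (div_pos ht hm)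

/-- Concentration plus extinction in the planar limit `m → 0⁺`: if the
Barenblatt solutions `B_m` on `ℝ²` have mass `M`, then the rescaled solutions
`B̃_m(x,t) = B_m(x,t/m)` of `∂_t u = div(u^{m-1}∇u)` converge, as `m → 0⁺`, to
`0` pointwise away from the origin and, vaguely (against continuous compactly
supported functions), to the measure `(M - 4πt)₊ δ₀`. -/
theorem planar_barenblatt_limit_m_zero
    (M t : ℝ) (hM : 0 < M) (ht : 0 < t)
    (C : ℝ → ℝ) (hCpos : ∀ m, 0 < m → m < 1 → 0 < C m)
    (hmass : ∀ m, 0 < m → m < 1 → ∀ τ : ℝ, 0 < τ →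
      ∫ x, planarBarenblatt m (C m) x τ = M) :
    (∀ x : EuclideanSpace ℝ (Fin 2), x ≠ 0 →
      Tendsto (fun m => planarBarenblatt m (C m) x (t / m)) (𝓝[>] 0) (𝓝 0)) ∧
    (∀ f : EuclideanSpace ℝ (Fin 2) → ℝ, Continuous f → HasCompactSupport f →
      Tendsto (fun m => ∫ x, f x * planarBarenblatt m (C m) x (t / m))
        (𝓝[>] 0) (𝓝 (max (M - 4 * π * t) 0 * f 0))) :=
  planar_barenblatt_limit_m_zero_general M t ht C hCpos hmass
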